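/- The fully entangled fraction χ is not constant on separable states: χ(I/d²) = 1/d² while χ(|00⟩⟨00|) = 1/d, and 1/d² ≠ 1/d when d ≥ 2. Hence χ is not nonincreasing under LOCC (since all separable states are mutually LOCC-convertible). -/

import Mathlib

open Matrix
open scoped Kronecker BigOperators ComplexOrder

noncomputable def phiPlus (d : ℕ) : (Fin d × Fin d) → ℂ :=
  fun q => if q.1 = q.2 then ((Real.sqrt d)⁻¹ : ℝ) else 0

noncomputable def phiProj (d : ℕ) : Matrix (Fin d × Fin d) (Fin d × Fin d) ℂ :=
  Matrix.vecMulVec (phiPlus d) (star (phiPlus d))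

noncomputable def overlapMAXE {d : ℕ} (ρ : Matrix (Fin d × Fin d) (Fin d × Fin d) ℂ)
    (U : Matrix (Fin d) (Fin d) ℂ) : ℝ :=
  (Matrix.trace (ρ * ((U ⊗ₖ (1 : Matrix (Fin d) (Fin d) ℂ)) * phiProj d *
    (U ⊗ₖ (1 : Matrix (Fin d) (Fin d) ℂ))ᴴ))).re

def ket00 (d : ℕ) (hd : 0 < d) : (Fin d × Fin d) → ℂ :=
  fun q => if q = (⟨0, hd⟩, ⟨0, hd⟩) then 1 else 0

-- auxiliary lemmas

lemma kron_one_conjT {d : ℕ} (U : Matrix (Fin d) (Fin d) ℂ) :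
    (U ⊗ₖ (1 : Matrix (Fin d) (Fin d) ℂ))ᴴ = Uᴴ ⊗ₖ (1 : Matrix (Fin d) (Fin d) ℂ) := by
  ext ⟨i, j⟩ ⟨k, l⟩
  by_cases h : j = l <;>
    simp [Matrix.conjTranspose_apply, Matrix.kroneckerMap_apply, Matrix.one_apply, h, eq_comm]

lemma trace_phiProj (d : ℕ) (hd : 0 < d) : Matrix.trace (phiProj d) = 1 := by
  have hd' : (d : ℝ) ≠ 0 := by positivity
  have hc : (((Real.sqrt d : ℝ)) : ℂ)⁻¹ * (((Real.sqrt d : ℝ)) : ℂ)⁻¹ = ((d : ℂ))⁻¹ := by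
    rw [← Complex.ofReal_inv, ← Complex.ofReal_mul, ← mul_inv,
      Real.mul_self_sqrt (by positivity)]
    push_cast
    ring
  have : Matrix.trace (phiProj d)
      = ∑ i : Fin d, ∑ j : Fin d, (if i = j then ((d : ℂ))⁻¹ else 0) := by
    rw [Matrix.trace]
    rw [Fintype.sum_prod_type]
    refine Finset.sum_congr rfl fun i _ => Finset.sum_congr rfl fun j _ => ?_
    simp only [Matrix.diag_apply, phiProj, Matrix.vecMulVec_apply, phiPlus, Pi.star_apply]
    by_cases h : i = j <;> simp [h, hc]
  rw [this]
  simp [Finset.sum_ite_eq, mul_inv_cancel₀ (show (d:ℂ) ≠ 0 by exact_mod_cast hd.ne')]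

lemma overlap_id (d : ℕ) (hd : 0 < d) (U : Matrix (Fin d) (Fin d) ℂ)
    (hU : U ∈ Matrix.unitaryGroup (Fin d) ℂ) :
    overlapMAXE ((((d : ℂ) ^ 2)⁻¹) • (1 : Matrix (Fin d × Fin d) (Fin d × Fin d) ℂ)) U
      = 1 / (d : ℝ) ^ 2 := by
  have hU' : Uᴴ * U = 1 := by
    have := (Matrix.mem_unitaryGroup_iff'.mp hU)
    simpa [Matrix.star_eq_conjTranspose] using this
  have hMtr : Matrix.trace ((U ⊗ₖ (1 : Matrix (Fin d) (Fin d) ℂ)) * phiProj d *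
      (U ⊗ₖ (1 : Matrix (Fin d) (Fin d) ℂ))ᴴ) = 1 := by
    rw [Matrix.trace_mul_cycle, kron_one_conjT,
      ← Matrix.mul_kronecker_mul, hU', Matrix.one_mul, Matrix.one_kronecker_one,
      Matrix.one_mul, trace_phiProj d hd]
  rw [overlapMAXE, Matrix.smul_mul, Matrix.one_mul, Matrix.trace_smul, smul_eq_mul, hMtr,
    mul_one]
  have : ((d : ℂ) ^ 2)⁻¹ = (((((d : ℝ)) ^ 2)⁻¹ : ℝ) : ℂ) := by push_cast; ring
  rw [this, Complex.ofReal_re, one_div]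

lemma overlap_ket00 (d : ℕ) (hd : 0 < d) (U : Matrix (Fin d) (Fin d) ℂ) :
    overlapMAXE (Matrix.vecMulVec (ket00 d hd) (star (ket00 d hd))) U
      = Complex.normSq (U ⟨0, hd⟩ ⟨0, hd⟩) / d := by
  set z : Fin d := ⟨0, hd⟩ with hz
  set q0 : Fin d × Fin d := (z, z) with hq0
  set M := (U ⊗ₖ (1 : Matrix (Fin d) (Fin d) ℂ)) * phiProj d *
    (U ⊗ₖ (1 : Matrix (Fin d) (Fin d) ℂ))ᴴ with hM
  have htr : Matrix.trace (Matrix.vecMulVec (ket00 d hd) (star (ket00 d hd)) * M) = M q0 q0 := by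
    rw [Matrix.trace]
    simp only [Matrix.diag_apply, Matrix.mul_apply, Matrix.vecMulVec_apply, ket00,
      Pi.star_apply]
    simp [Finset.sum_ite_eq, Finset.mul_sum, apply_ite (star : ℂ → ℂ), ite_mul, mul_ite]
    rfl
  -- value of the vector (U ⊗ 1) *ᵥ phiPlus at q0
  have hv : ∀ b : Fin d × Fin d,
      (U ⊗ₖ (1 : Matrix (Fin d) (Fin d) ℂ)) q0 b * phiPlus d b
        = if b = (z, z) then U z z * ((Real.sqrt d)⁻¹ : ℝ) else 0 := by
    rintro ⟨k, l⟩
    simp only [hq0, Matrix.kroneckerMap_apply, Matrix.one_apply, phiPlus]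
    by_cases h1 : k = l <;> by_cases h2 : z = l <;>
      simp_all [Prod.ext_iff, eq_comm] <;> ring
  have hMq : M q0 q0 = (U z z * ((Real.sqrt d)⁻¹ : ℝ))
      * star (U z z * ((Real.sqrt d)⁻¹ : ℝ)) := by
    rw [hM, Matrix.mul_apply]
    have : ∀ b, ((U ⊗ₖ (1 : Matrix (Fin d) (Fin d) ℂ)) * phiProj d) q0 b
        = (U z z * ((Real.sqrt d)⁻¹ : ℝ)) * star (phiPlus d b) := by
      intro b
      rw [Matrix.mul_apply]
      simp only [phiProj, Matrix.vecMulVec_apply]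
      rw [Finset.sum_congr rfl fun a _ => by rw [← mul_assoc, hv a]]
      simp [Finset.sum_ite_eq]
    rw [Finset.sum_congr rfl fun b _ => by rw [this b]]
    have : ∀ b, star (phiPlus d b) * (U ⊗ₖ (1 : Matrix (Fin d) (Fin d) ℂ))ᴴ b q0
        = star ((U ⊗ₖ (1 : Matrix (Fin d) (Fin d) ℂ)) q0 b * phiPlus d b) := by
      intro b
      rw [Matrix.conjTranspose_apply, star_mul']
      ring
    rw [Finset.sum_congr rfl fun b _ => by rw [mul_assoc, this b]]
    rw [← Finset.mul_sum, ← star_sum]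
    rw [Finset.sum_congr rfl fun b _ => hv b]
    simp [Finset.sum_ite_eq]
  have hsq : ((Real.sqrt d)⁻¹ : ℝ) * ((Real.sqrt d)⁻¹ : ℝ) = ((d : ℝ))⁻¹ := by
    rw [← mul_inv, Real.mul_self_sqrt (by positivity)]
  rw [overlapMAXE, htr, hMq, Complex.star_def, Complex.mul_conj]
  simp only [Complex.normSq_mul, Complex.normSq_ofReal, hsq, Complex.ofReal_mul,
    Complex.ofReal_inv, Complex.mul_re, Complex.inv_re, Complex.inv_im, Complex.ofReal_re,
    Complex.ofReal_im]
  have hd' : (d:ℝ) ≠ 0 := by positivity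
  field_simp [Complex.normSq]
  have h2 : Complex.normSq (1 / ((Real.sqrt d : ℝ) : ℂ)) = (d:ℝ)⁻¹ := by
    rw [one_div, ← Complex.ofReal_inv, Complex.normSq_ofReal, hsq]
  rw [h2, zero_pow two_ne_zero, sub_zero, mul_assoc, inv_mul_cancel₀ hd', mul_one]

lemma row_norm_one {d : ℕ} (U : Matrix (Fin d) (Fin d) ℂ)
    (hU : U ∈ Matrix.unitaryGroup (Fin d) ℂ) (i : Fin d) :
    ∑ k, Complex.normSq (U i k) = 1 := by
  have h1 : U * Uᴴ = 1 := by
    have := Matrix.mem_unitaryGroup_iff.mp hU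
    simpa [Matrix.star_eq_conjTranspose] using this
  have := congrArg (fun M => M i i) h1
  simp only [Matrix.mul_apply, Matrix.conjTranspose_apply, Matrix.one_apply_eq] at this
  have := congrArg Complex.re this
  simpa [Complex.mul_conj, Complex.normSq] using this

/-- `χ` is not constant on separable states: `χ(I/d²) = 1/d²` while `χ(|00⟩⟨00|) = 1/d`,
and `1/d² ≠ 1/d` for `d ≥ 2`; hence `χ` is not LOCC nonincreasing. -/
theorem chi_not_constant_on_separable (d : ℕ) (hd : 2 ≤ d) :
    IsGreatest
      {x : ℝ | ∃ U ∈ Matrix.unitaryGroup (Fin d) ℂ,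
        x = overlapMAXE ((((d : ℂ) ^ 2)⁻¹) • (1 : Matrix (Fin d × Fin d) (Fin d × Fin d) ℂ)) U}
      (1 / d ^ 2)
    ∧ IsGreatest
      {x : ℝ | ∃ U ∈ Matrix.unitaryGroup (Fin d) ℂ,
        x = overlapMAXE
          (Matrix.vecMulVec (ket00 d (by omega)) (star (ket00 d (by omega)))) U}
      (1 / d)
    ∧ (1 / (d : ℝ) ^ 2 ≠ 1 / (d : ℝ)) := by
  have hd0 : 0 < d := by omega
  have hdR : (1:ℝ) < (d:ℝ) := by exact_mod_cast hd.trans_lt' one_lt_two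
  refine ⟨⟨⟨1, Submonoid.one_mem _, ?_⟩, ?_⟩, ⟨⟨1, Submonoid.one_mem _, ?_⟩, ?_⟩, ?_⟩
  · rw [overlap_id d hd0 1 (Submonoid.one_mem _)]
  · rintro x ⟨U, hU, rfl⟩
    rw [overlap_id d hd0 U hU]
  · rw [overlap_ket00 d hd0 1]
    simp [Matrix.one_apply]
  · rintro x ⟨U, hU, rfl⟩
    rw [overlap_ket00 d hd0 U]
    have h1 : Complex.normSq (U ⟨0, hd0⟩ ⟨0, hd0⟩) ≤ 1 := by
      rw [← row_norm_one U hU ⟨0, hd0⟩]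
      exact Finset.single_le_sum (fun k _ => Complex.normSq_nonneg _) (Finset.mem_univ _)
    have hdpos : (0:ℝ) < d := by positivity
    gcongr
  · intro h
    have : (d:ℝ) ^ 2 = d := by
      field_simp at h
      linarith [h]
    nlinarith
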